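/- For ρ ∈ (0,1) and probability measures W, Q, the Rényi divergence satisfies (1−ρ)D_ρ(W‖Q) = inf over probability measures V of [ρ D_1(V‖W) + (1−ρ) D_1(V‖Q)], where D_1 is the Kullback-Leibler divergence (with the convention that the expression is ∞ when otherwise undefined). -/

import Mathlib

/-! For `V ≪ W` and `V ≪ Q`, write `v = dV/dν`, `r = (dW/dν)^ρ (dQ/dν)^(1-ρ)` and `Z = ∫ r dν`.
Then `ρ log (dV/dW) + (1-ρ) log (dV/dQ) = log (v / r)` holds `V`-a.e., and `∫ r / v dV ≤ Z`, so
Jensen's inequality for `log` gives `ρ D(V‖W) + (1-ρ) D(V‖Q) ≥ -log Z = (1-ρ) D_ρ(W‖Q)`; the same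
estimate shows that `Z > 0` as soon as some `V` has both divergences finite. The bound is attained
at the tilted measure `(r / Z) ν`, on which the combination of log-likelihood ratios is the
constant `-log Z`; each ratio is integrable there because
`x^ρ y^(1-ρ) |log y - log x| ≤ y / ρ + x / (1 - ρ)`. -/

open MeasureTheory Real
open scoped ENNReal Classical

/-- Integrand of the order-`ρ` Rényi divergence with respect to a dominating measure `ν`. -/
noncomputable def renyiIntegrand {Y : Type*} [MeasurableSpace Y] (ρ : ℝ) (W Q ν : Measure Y)
    (y : Y) : ℝ :=
  ((W.rnDeriv ν y).toReal) ^ ρ * ((Q.rnDeriv ν y).toReal) ^ (1 - ρ)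

/-- Order-`ρ` Rényi divergence `D_ρ(W‖Q)` computed via a dominating measure `ν`. -/
noncomputable def renyiDiv {Y : Type*} [MeasurableSpace Y] (ρ : ℝ) (W Q ν : Measure Y) : ℝ :=
  (ρ - 1)⁻¹ * Real.log (∫ y, renyiIntegrand ρ W Q ν y ∂ν)

/-- Kullback-Leibler divergence `D_1(μ‖ν) = ∫ log (dμ/dν) dμ` (real-valued version). -/
noncomputable def klDiv' {Y : Type*} [MeasurableSpace Y] (μ ν : Measure Y) : ℝ :=
  ∫ y, Real.log ((μ.rnDeriv ν y).toReal) ∂μ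

/-- Order-`ρ` tilted probability measure `W_ρ^Q`:
`dW_ρ^Q/dν = e^{(1-ρ) D_ρ(W‖Q)} (dW/dν)^ρ (dQ/dν)^{1-ρ}`. -/
noncomputable def tilted {Y : Type*} [MeasurableSpace Y] (ρ : ℝ) (W Q ν : Measure Y) :
    Measure Y :=
  ν.withDensity fun y =>
    ENNReal.ofReal (Real.exp ((1 - ρ) * renyiDiv ρ W Q ν) * renyiIntegrand ρ W Q ν y)

/-- Kullback-Leibler divergence, with value `∞` when undefined. -/
noncomputable def klDivE {Y : Type*} [MeasurableSpace Y] (μ ν : Measure Y) : ℝ≥0∞ :=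
  if μ ≪ ν ∧ Integrable (fun y => Real.log ((μ.rnDeriv ν y).toReal)) μ
  then ENNReal.ofReal (klDiv' μ ν) else ∞

/-- Order-`ρ` Rényi divergence with value `∞` when undefined (for `ρ ∈ (0,1)` this happens
exactly when `W ⊥ Q`). -/
noncomputable def renyiDivE {Y : Type*} [MeasurableSpace Y] (ρ : ℝ) (W Q ν : Measure Y) :
    ℝ≥0∞ :=
  if 0 < ∫ y, renyiIntegrand ρ W Q ν y ∂ν then ENNReal.ofReal (renyiDiv ρ W Q ν) else ∞

open InformationTheory

lemma rpow_mul_rpow_one_sub_mul_log_div_le {σ x y : ℝ} (hσ : 0 < σ) (hx : 0 < x) (hy : 0 < y) :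
    x ^ σ * y ^ (1 - σ) * log (y / x) ≤ y / σ := by
  have hxy : 0 < y / x := div_pos hy hx
  calc x ^ σ * y ^ (1 - σ) * log (y / x)
      ≤ x ^ σ * y ^ (1 - σ) * ((y / x) ^ σ / σ) := by
        gcongr
        exact log_le_rpow_div hxy.le hσ
    _ = (x * (y / x)) ^ σ * y ^ (1 - σ) / σ := by rw [mul_rpow hx.le hxy.le]; ring
    _ = y / σ := by rw [mul_div_cancel₀ y hx.ne', ← rpow_add hy, add_sub_cancel, rpow_one]

lemma rpow_mul_rpow_one_sub_mul_abs_log_sub_le {ρ x y : ℝ} (hρ0 : 0 < ρ) (hρ1 : ρ < 1)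
    (hx : 0 ≤ x) (hy : 0 ≤ y) :
    x ^ ρ * y ^ (1 - ρ) * |log y - log x| ≤ y / ρ + x / (1 - ρ) := by
  have h1ρ : 0 < 1 - ρ := by linarith
  rcases hx.eq_or_lt with rfl | hx
  · rw [zero_rpow hρ0.ne', zero_mul, zero_mul]; positivity
  rcases hy.eq_or_lt with rfl | hy
  · rw [zero_rpow h1ρ.ne', mul_zero, zero_mul]; positivity
  rcases abs_cases (log y - log x) with ⟨habs, -⟩ | ⟨habs, -⟩
  · have := rpow_mul_rpow_one_sub_mul_log_div_le hρ0 hx hy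
    rw [log_div hy.ne' hx.ne'] at this
    rw [habs]
    linarith [div_nonneg hx.le h1ρ.le]
  · have := rpow_mul_rpow_one_sub_mul_log_div_le h1ρ hy hx
    rw [log_div hx.ne' hy.ne', sub_sub_cancel, mul_comm (y ^ _)] at this
    rw [habs, neg_sub]
    linarith [div_nonneg hy.le hρ0.le]

section MeasureLemmas

variable {α : Type*} [MeasurableSpace α]

lemma integral_pos_of_ae_pos {μ : Measure α} [IsProbabilityMeasure μ] {h : α → ℝ}
    (hpos : ∀ᵐ y ∂μ, 0 < h y) (hint : Integrable h μ) : 0 < ∫ y, h y ∂μ := by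
  obtain ⟨y, hy_le, hy_pos⟩ := Measure.exists_mem_of_measure_ne_zero_of_ae
    (measure_le_integral_pos hint).ne' (ae_restrict_of_ae hpos)
  exact hy_pos.trans_le hy_le

-- `ConcaveOn.le_map_integral` does not apply: it needs a closed domain of concavity.
lemma integral_log_le_log_integral {μ : Measure α} [IsProbabilityMeasure μ] {h : α → ℝ}
    (hpos : ∀ᵐ y ∂μ, 0 < h y) (hint : Integrable h μ)
    (hlog : Integrable (fun y => log (h y)) μ) :
    ∫ y, log (h y) ∂μ ≤ log (∫ y, h y ∂μ) := by
  set c := ∫ y, h y ∂μ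
  have hc : 0 < c := integral_pos_of_ae_pos hpos hint
  have htangent : ∀ᵐ y ∂μ, log (h y) ≤ h y / c - 1 + log c := by
    filter_upwards [hpos] with y hy
    have := log_le_sub_one_of_pos (div_pos hy hc)
    rw [log_div hy.ne' hc.ne'] at this
    linarith
  have hsub : Integrable (fun y => h y / c - 1) μ := (hint.div_const c).sub (integrable_const 1)
  calc ∫ y, log (h y) ∂μ ≤ ∫ y, (h y / c - 1 + log c) ∂μ :=
        integral_mono_ae hlog (hsub.add (integrable_const _)) htangent
    _ = log c := by
      rw [integral_add hsub (integrable_const _),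
        integral_sub (hint.div_const c) (integrable_const 1), integral_div]
      simp [c, div_self hc.ne']

variable {μ ν P : Measure α}

lemma ae_toReal_rnDeriv_pos [SigmaFinite P] [SigmaFinite ν] (hμP : μ ≪ P) (hPν : P ≪ ν) :
    ∀ᵐ y ∂μ, 0 < (P.rnDeriv ν y).toReal := by
  filter_upwards [hμP.ae_le (Measure.rnDeriv_pos hPν),
    (hμP.trans hPν).ae_le (Measure.rnDeriv_lt_top P ν)] with y hpos hlt
  exact ENNReal.toReal_pos hpos.ne' hlt.ne

lemma llr_ae_eq_log_sub_log [SigmaFinite μ] [SigmaFinite P] [SigmaFinite ν]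
    (hμP : μ ≪ P) (hPν : P ≪ ν) :
    llr μ P =ᵐ[μ] fun y => log (μ.rnDeriv ν y).toReal - log (P.rnDeriv ν y).toReal := by
  filter_upwards [(hμP.trans hPν).ae_le (Measure.rnDeriv_mul_rnDeriv hμP (κ := ν)),
    ae_toReal_rnDeriv_pos hμP hPν, Measure.rnDeriv_pos hμP,
    hμP.ae_le (Measure.rnDeriv_lt_top μ P)] with y hchain hP hpos hlt
  have hμP_pos : 0 < (μ.rnDeriv P y).toReal := ENNReal.toReal_pos hpos.ne' hlt.ne
  rw [llr_def, ← hchain, Pi.mul_apply, ENNReal.toReal_mul, log_mul hμP_pos.ne' hP.ne']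
  ring

lemma integrable_div_toReal_rnDeriv [SigmaFinite μ] [SigmaFinite ν] (hμν : μ ≪ ν) {r : α → ℝ}
    (hr : Integrable r ν) :
    Integrable (fun y => r y / (μ.rnDeriv ν y).toReal) μ := by
  have hv : Measurable fun y => (μ.rnDeriv ν y).toReal :=
    (Measure.measurable_rnDeriv μ ν).ennreal_toReal
  refine (integrable_rnDeriv_smul_iff hμν).1 (hr.mono ?_ (ae_of_all _ fun y => ?_))
  · exact (hv.aemeasurable.mul (hr.aemeasurable.div hv.aemeasurable)).aestronglyMeasurable
  · rw [smul_eq_mul, mul_div_left_comm, norm_mul]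
    refine mul_le_of_le_one_right (norm_nonneg _) ?_
    rw [Real.norm_eq_abs, abs_div, abs_of_nonneg ENNReal.toReal_nonneg]
    exact div_self_le_one _

lemma integral_div_toReal_rnDeriv_le [SigmaFinite μ] [SigmaFinite ν] (hμν : μ ≪ ν) {r : α → ℝ}
    (hr : Integrable r ν) (hr0 : 0 ≤ r) :
    ∫ y, r y / (μ.rnDeriv ν y).toReal ∂μ ≤ ∫ y, r y ∂ν := by
  rw [← integral_rnDeriv_smul hμν]
  refine integral_mono ((integrable_rnDeriv_smul_iff hμν).2
    (integrable_div_toReal_rnDeriv hμν hr)) hr fun y => ?_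
  rw [smul_eq_mul, mul_div_left_comm]
  exact mul_le_of_le_one_right (hr0 y) (div_self_le_one _)

lemma withDensity_absolutelyContinuous_of_rnDeriv_eq_zero [SigmaFinite P] [SigmaFinite ν]
    (hPν : P ≪ ν) {d : α → ℝ≥0∞} (hd : ∀ y, P.rnDeriv ν y = 0 → d y = 0) : ν.withDensity d ≪ P := by
  refine Measure.AbsolutelyContinuous.mk fun s hs hPs => ?_
  have hzero : P.rnDeriv ν =ᵐ[ν.restrict s] 0 := by
    rwa [← lintegral_eq_zero_iff (Measure.measurable_rnDeriv P ν),
      Measure.setLIntegral_rnDeriv hPν]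
  rw [withDensity_apply _ hs, lintegral_congr_ae (hzero.mono hd)]
  exact lintegral_zero

end MeasureLemmas

section KLDivE

variable {α : Type*} [MeasurableSpace α] {μ P R : Measure α}

lemma klDiv'_eq_integral_llr (μ P : Measure α) : klDiv' μ P = ∫ y, llr μ P y ∂μ := rfl

lemma klDivE_of_ac_of_integrable (h : μ ≪ P) (hi : Integrable (llr μ P) μ) :
    klDivE μ P = ENNReal.ofReal (klDiv' μ P) :=
  if_pos ⟨h, hi⟩

lemma klDivE_of_not_ac_and_integrable (h : ¬(μ ≪ P ∧ Integrable (llr μ P) μ)) :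
    klDivE μ P = ∞ :=
  if_neg h

lemma klDiv'_nonneg [IsProbabilityMeasure μ] [IsProbabilityMeasure P] (h : μ ≪ P)
    (hi : Integrable (llr μ P) μ) : 0 ≤ klDiv' μ P := by
  simpa [klDiv'_eq_integral_llr] using integral_llr_add_sub_measure_univ_nonneg h hi

lemma weighted_klDivE_of_integrable [IsProbabilityMeasure μ] [IsProbabilityMeasure P]
    [IsProbabilityMeasure R] {a b : ℝ} (ha : 0 ≤ a) (hb : 0 ≤ b) (hP : μ ≪ P)
    (hiP : Integrable (llr μ P) μ) (hR : μ ≪ R) (hiR : Integrable (llr μ R) μ) :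
    ENNReal.ofReal a * klDivE μ P + ENNReal.ofReal b * klDivE μ R =
      ENNReal.ofReal (a * klDiv' μ P + b * klDiv' μ R) := by
  rw [klDivE_of_ac_of_integrable hP hiP, klDivE_of_ac_of_integrable hR hiR,
    ← ENNReal.ofReal_mul ha, ← ENNReal.ofReal_mul hb,
    ← ENNReal.ofReal_add (mul_nonneg ha (klDiv'_nonneg hP hiP))
      (mul_nonneg hb (klDiv'_nonneg hR hiR))]

lemma weighted_klDivE_eq_top {a b : ℝ} (ha : 0 < a) (hb : 0 < b)
    (h : ¬((μ ≪ P ∧ Integrable (llr μ P) μ) ∧ (μ ≪ R ∧ Integrable (llr μ R) μ))) :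
    ENNReal.ofReal a * klDivE μ P + ENNReal.ofReal b * klDivE μ R = ∞ := by
  rcases not_and_or.1 h with hP | hR
  · rw [klDivE_of_not_ac_and_integrable hP, ENNReal.mul_top (ENNReal.ofReal_pos.2 ha).ne',
      top_add]
  · rw [klDivE_of_not_ac_and_integrable hR, ENNReal.mul_top (ENNReal.ofReal_pos.2 hb).ne',
      add_top]

end KLDivE

section Renyi

variable {Y : Type*} [MeasurableSpace Y] {ρ : ℝ} {W Q ν V : Measure Y}

lemma renyiIntegrand_nonneg (y : Y) : 0 ≤ renyiIntegrand ρ W Q ν y := by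
  unfold renyiIntegrand; positivity

lemma measurable_renyiIntegrand : Measurable (renyiIntegrand ρ W Q ν) :=
  ((Measure.measurable_rnDeriv W ν).ennreal_toReal.pow_const ρ).mul
    ((Measure.measurable_rnDeriv Q ν).ennreal_toReal.pow_const (1 - ρ))

lemma renyiIntegrand_swap : renyiIntegrand (1 - ρ) Q W ν = renyiIntegrand ρ W Q ν := by
  ext y; rw [renyiIntegrand, renyiIntegrand, sub_sub_cancel, mul_comm]

lemma integrable_renyiIntegrand [IsFiniteMeasure W] [IsFiniteMeasure Q] (hρ0 : 0 ≤ ρ)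
    (hρ1 : ρ ≤ 1) : Integrable (renyiIntegrand ρ W Q ν) ν := by
  refine (((Measure.integrable_toReal_rnDeriv (μ := W)).const_mul ρ).add
    ((Measure.integrable_toReal_rnDeriv (μ := Q)).const_mul (1 - ρ))).mono'
    measurable_renyiIntegrand.aestronglyMeasurable (ae_of_all _ fun y => ?_)
  rw [Real.norm_of_nonneg (renyiIntegrand_nonneg y)]
  exact geom_mean_le_arith_mean2_weighted hρ0 (sub_nonneg.2 hρ1) ENNReal.toReal_nonneg
    ENNReal.toReal_nonneg (add_sub_cancel ρ 1)

lemma renyiIntegrand_pos {y : Y} (hW : 0 < (W.rnDeriv ν y).toReal)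
    (hQ : 0 < (Q.rnDeriv ν y).toReal) : 0 < renyiIntegrand ρ W Q ν y :=
  mul_pos (rpow_pos_of_pos hW _) (rpow_pos_of_pos hQ _)

lemma log_renyiIntegrand {y : Y} (hW : 0 < (W.rnDeriv ν y).toReal)
    (hQ : 0 < (Q.rnDeriv ν y).toReal) :
    log (renyiIntegrand ρ W Q ν y) =
      ρ * log (W.rnDeriv ν y).toReal + (1 - ρ) * log (Q.rnDeriv ν y).toReal := by
  rw [renyiIntegrand, log_mul (rpow_pos_of_pos hW _).ne' (rpow_pos_of_pos hQ _).ne', log_rpow hW,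
    log_rpow hQ]

lemma one_sub_mul_renyiDiv (hρ1 : ρ ≠ 1) :
    (1 - ρ) * renyiDiv ρ W Q ν = -log (∫ y, renyiIntegrand ρ W Q ν y ∂ν) := by
  rw [renyiDiv, ← mul_assoc, ← neg_sub ρ 1, neg_mul, mul_inv_cancel₀ (sub_ne_zero.2 hρ1),
    neg_one_mul]

section AbsolutelyContinuous

variable [SigmaFinite ν]

lemma ae_renyiIntegrand_div_rnDeriv_pos [SigmaFinite W] [SigmaFinite Q] [SigmaFinite V]
    (hW : W ≪ ν) (hQ : Q ≪ ν) (hVW : V ≪ W) (hVQ : V ≪ Q) :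
    ∀ᵐ y ∂V, 0 < renyiIntegrand ρ W Q ν y / (V.rnDeriv ν y).toReal := by
  filter_upwards [ae_toReal_rnDeriv_pos hVW hW, ae_toReal_rnDeriv_pos hVQ hQ,
    ae_toReal_rnDeriv_pos Measure.AbsolutelyContinuous.rfl (hVW.trans hW)] with y hf hg hv
  exact div_pos (renyiIntegrand_pos hf hg) hv

lemma ae_log_renyiIntegrand_div_rnDeriv [SigmaFinite W] [SigmaFinite Q] [SigmaFinite V]
    (hW : W ≪ ν) (hQ : Q ≪ ν) (hVW : V ≪ W) (hVQ : V ≪ Q) :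
    ∀ᵐ y ∂V, log (renyiIntegrand ρ W Q ν y / (V.rnDeriv ν y).toReal) =
      -(ρ * llr V W y + (1 - ρ) * llr V Q y) := by
  filter_upwards [llr_ae_eq_log_sub_log hVW hW, llr_ae_eq_log_sub_log hVQ hQ,
    ae_toReal_rnDeriv_pos hVW hW, ae_toReal_rnDeriv_pos hVQ hQ,
    ae_toReal_rnDeriv_pos Measure.AbsolutelyContinuous.rfl (hVW.trans hW)]
    with y hllrW hllrQ hf hg hv
  rw [log_div (renyiIntegrand_pos hf hg).ne' hv.ne', log_renyiIntegrand hf hg, hllrW, hllrQ]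
  ring

variable [IsFiniteMeasure W] [IsFiniteMeasure Q] [IsProbabilityMeasure V]

lemma integral_renyiIntegrand_pos (hρ0 : 0 ≤ ρ) (hρ1 : ρ ≤ 1) (hW : W ≪ ν) (hQ : Q ≪ ν)
    (hVW : V ≪ W) (hVQ : V ≪ Q) : 0 < ∫ y, renyiIntegrand ρ W Q ν y ∂ν :=
  (integral_pos_of_ae_pos (ae_renyiIntegrand_div_rnDeriv_pos hW hQ hVW hVQ)
    (integrable_div_toReal_rnDeriv (hVW.trans hW) (integrable_renyiIntegrand hρ0 hρ1))).trans_le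
    (integral_div_toReal_rnDeriv_le (hVW.trans hW) (integrable_renyiIntegrand hρ0 hρ1)
      renyiIntegrand_nonneg)

lemma neg_log_integral_renyiIntegrand_le (hρ0 : 0 ≤ ρ) (hρ1 : ρ ≤ 1) (hW : W ≪ ν)
    (hQ : Q ≪ ν) (hVW : V ≪ W) (hVQ : V ≪ Q) (hiW : Integrable (llr V W) V)
    (hiQ : Integrable (llr V Q) V) :
    -log (∫ y, renyiIntegrand ρ W Q ν y ∂ν) ≤ ρ * klDiv' V W + (1 - ρ) * klDiv' V Q := by
  have hVν := hVW.trans hW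
  have hr := integrable_renyiIntegrand (ν := ν) (W := W) (Q := Q) hρ0 hρ1
  have hpos := ae_renyiIntegrand_div_rnDeriv_pos (ρ := ρ) hW hQ hVW hVQ
  have hlog := ae_log_renyiIntegrand_div_rnDeriv (ρ := ρ) hW hQ hVW hVQ
  have hiWQ : Integrable (fun y => ρ * llr V W y + (1 - ρ) * llr V Q y) V :=
    (hiW.const_mul ρ).add (hiQ.const_mul (1 - ρ))
  have hjensen := integral_log_le_log_integral hpos (integrable_div_toReal_rnDeriv hVν hr)
    (hiWQ.neg.congr (hlog.mono fun y hy => hy.symm))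
  have hmass := log_le_log (integral_pos_of_ae_pos hpos (integrable_div_toReal_rnDeriv hVν hr))
    (integral_div_toReal_rnDeriv_le hVν hr renyiIntegrand_nonneg)
  rw [klDiv'_eq_integral_llr, klDiv'_eq_integral_llr]
  rw [integral_congr_ae hlog, integral_neg, integral_add (hiW.const_mul ρ)
    (hiQ.const_mul (1 - ρ)), integral_const_mul, integral_const_mul] at hjensen
  exact neg_le.1 (hjensen.trans hmass)

lemma weighted_klDivE_eq_top_of_not_integral_renyiIntegrand_pos (hρ0 : 0 < ρ) (hρ1 : ρ < 1)
    (hW : W ≪ ν) (hQ : Q ≪ ν) (hZ : ¬0 < ∫ y, renyiIntegrand ρ W Q ν y ∂ν) :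
    ENNReal.ofReal ρ * klDivE V W + ENNReal.ofReal (1 - ρ) * klDivE V Q = ∞ :=
  weighted_klDivE_eq_top hρ0 (sub_pos.2 hρ1) fun hV =>
    hZ (integral_renyiIntegrand_pos hρ0.le hρ1.le hW hQ hV.1.1 hV.2.1)

end AbsolutelyContinuous

lemma tilted_swap (hρ0 : ρ ≠ 0) (hρ1 : ρ ≠ 1) : tilted (1 - ρ) Q W ν = tilted ρ W Q ν := by
  rw [tilted, tilted, one_sub_mul_renyiDiv (by simpa [sub_eq_self] using hρ0),
    one_sub_mul_renyiDiv hρ1, renyiIntegrand_swap]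

lemma tilted_eq_withDensity (hρ1 : ρ ≠ 1) (hZ : 0 < ∫ y, renyiIntegrand ρ W Q ν y ∂ν) :
    tilted ρ W Q ν = ν.withDensity fun y =>
      ENNReal.ofReal ((∫ y, renyiIntegrand ρ W Q ν y ∂ν)⁻¹ * renyiIntegrand ρ W Q ν y) := by
  rw [tilted, one_sub_mul_renyiDiv hρ1, exp_neg, exp_log hZ]

lemma tilted_absolutelyContinuous : tilted ρ W Q ν ≪ ν :=
  withDensity_absolutelyContinuous _ _

lemma isProbabilityMeasure_tilted [IsFiniteMeasure W] [IsFiniteMeasure Q] (hρ0 : 0 ≤ ρ)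
    (hρ1 : ρ < 1) (hZ : 0 < ∫ y, renyiIntegrand ρ W Q ν y ∂ν) :
    IsProbabilityMeasure (tilted ρ W Q ν) := by
  constructor
  rw [tilted_eq_withDensity hρ1.ne hZ, withDensity_apply _ MeasurableSet.univ,
    Measure.restrict_univ, ← ofReal_integral_eq_lintegral_ofReal
      ((integrable_renyiIntegrand hρ0 hρ1.le).const_mul _)
      (ae_of_all _ fun y => mul_nonneg (inv_nonneg.2 hZ.le) (renyiIntegrand_nonneg y)),
    integral_const_mul, inv_mul_cancel₀ hZ.ne', ENNReal.ofReal_one]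

section Tilted

variable [SigmaFinite ν]

lemma rnDeriv_tilted (hρ1 : ρ ≠ 1) (hZ : 0 < ∫ y, renyiIntegrand ρ W Q ν y ∂ν) :
    (tilted ρ W Q ν).rnDeriv ν =ᵐ[ν] fun y =>
      ENNReal.ofReal ((∫ y, renyiIntegrand ρ W Q ν y ∂ν)⁻¹ * renyiIntegrand ρ W Q ν y) := by
  rw [tilted_eq_withDensity hρ1 hZ]
  exact Measure.rnDeriv_withDensity ν
    (measurable_const.mul measurable_renyiIntegrand).ennreal_ofReal

lemma tilted_absolutelyContinuous_left [SigmaFinite W] (hρ0 : ρ ≠ 0) (hW : W ≪ ν) :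
    tilted ρ W Q ν ≪ W :=
  withDensity_absolutelyContinuous_of_rnDeriv_eq_zero hW fun y hy => by
    simp [renyiIntegrand, hy, zero_rpow hρ0]

lemma tilted_absolutelyContinuous_right [SigmaFinite Q] (hρ1 : ρ ≠ 1) (hQ : Q ≪ ν) :
    tilted ρ W Q ν ≪ Q :=
  withDensity_absolutelyContinuous_of_rnDeriv_eq_zero hQ fun y hy => by
    simp [renyiIntegrand, hy, zero_rpow (sub_ne_zero.2 hρ1.symm)]

variable [IsFiniteMeasure W] [IsFiniteMeasure Q]

lemma integrable_log_sub_log_tilted (hρ0 : 0 < ρ) (hρ1 : ρ < 1)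
    (hZ : 0 < ∫ y, renyiIntegrand ρ W Q ν y ∂ν) :
    Integrable (fun y => log (Q.rnDeriv ν y).toReal - log (W.rnDeriv ν y).toReal)
      (tilted ρ W Q ν) := by
  have := isProbabilityMeasure_tilted hρ0.le hρ1 hZ
  set Z := ∫ y, renyiIntegrand ρ W Q ν y ∂ν
  have hf := (Measure.measurable_rnDeriv W ν).ennreal_toReal
  have hg := (Measure.measurable_rnDeriv Q ν).ennreal_toReal
  have hbound : Integrable (fun y => Z⁻¹ * ((Q.rnDeriv ν y).toReal / ρ +
      (W.rnDeriv ν y).toReal / (1 - ρ))) ν :=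
    ((Measure.integrable_toReal_rnDeriv.div_const _).add
      (Measure.integrable_toReal_rnDeriv.div_const _)).const_mul _
  rw [← integrable_rnDeriv_smul_iff tilted_absolutelyContinuous]
  refine hbound.mono' ((Measure.measurable_rnDeriv _ ν).ennreal_toReal.smul
    ((measurable_log.comp hg).sub (measurable_log.comp hf))).aestronglyMeasurable ?_
  filter_upwards [rnDeriv_tilted hρ1.ne hZ] with y hy
  have hr : 0 ≤ Z⁻¹ * renyiIntegrand ρ W Q ν y :=
    mul_nonneg (inv_nonneg.2 hZ.le) (renyiIntegrand_nonneg y)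
  rw [hy, smul_eq_mul, ENNReal.toReal_ofReal hr, norm_mul, Real.norm_of_nonneg hr, mul_assoc,
    Real.norm_eq_abs]
  gcongr
  exact rpow_mul_rpow_one_sub_mul_abs_log_sub_le hρ0 hρ1 ENNReal.toReal_nonneg
    ENNReal.toReal_nonneg

lemma llr_tilted_left_ae_eq (hρ0 : 0 < ρ) (hρ1 : ρ < 1) (hW : W ≪ ν) (hQ : Q ≪ ν)
    (hZ : 0 < ∫ y, renyiIntegrand ρ W Q ν y ∂ν) :
    llr (tilted ρ W Q ν) W =ᵐ[tilted ρ W Q ν] fun y =>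
      -log (∫ y, renyiIntegrand ρ W Q ν y ∂ν) +
        (1 - ρ) * (log (Q.rnDeriv ν y).toReal - log (W.rnDeriv ν y).toReal) := by
  have := isProbabilityMeasure_tilted hρ0.le hρ1 hZ
  have hTW := tilted_absolutelyContinuous_left (Q := Q) hρ0.ne' hW
  have hTQ := tilted_absolutelyContinuous_right (W := W) hρ1.ne hQ
  filter_upwards [llr_ae_eq_log_sub_log hTW hW,
    tilted_absolutelyContinuous.ae_le (rnDeriv_tilted hρ1.ne hZ),
    ae_toReal_rnDeriv_pos hTW hW, ae_toReal_rnDeriv_pos hTQ hQ] with y hllr hrn hf hg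
  rw [hllr, hrn, ENNReal.toReal_ofReal (mul_nonneg (inv_nonneg.2 hZ.le) (renyiIntegrand_nonneg y)),
    log_mul (inv_ne_zero hZ.ne') (renyiIntegrand_pos hf hg).ne', log_inv,
    log_renyiIntegrand hf hg]
  ring

lemma integrable_llr_tilted_left (hρ0 : 0 < ρ) (hρ1 : ρ < 1) (hW : W ≪ ν) (hQ : Q ≪ ν)
    (hZ : 0 < ∫ y, renyiIntegrand ρ W Q ν y ∂ν) :
    Integrable (llr (tilted ρ W Q ν) W) (tilted ρ W Q ν) :=
  have := isProbabilityMeasure_tilted hρ0.le hρ1 hZ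
  ((integrable_const _).add ((integrable_log_sub_log_tilted hρ0 hρ1 hZ).const_mul _)).congr
    (llr_tilted_left_ae_eq hρ0 hρ1 hW hQ hZ).symm

lemma integrable_llr_tilted_right (hρ0 : 0 < ρ) (hρ1 : ρ < 1) (hW : W ≪ ν) (hQ : Q ≪ ν)
    (hZ : 0 < ∫ y, renyiIntegrand ρ W Q ν y ∂ν) :
    Integrable (llr (tilted ρ W Q ν) Q) (tilted ρ W Q ν) := by
  rw [← tilted_swap hρ0.ne' hρ1.ne]
  have hZ' : 0 < ∫ y, renyiIntegrand (1 - ρ) Q W ν y ∂ν := by rwa [renyiIntegrand_swap]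
  exact integrable_llr_tilted_left (ρ := 1 - ρ) (sub_pos.2 hρ1) (sub_lt_self 1 hρ0) hQ hW hZ'

/-- On the tilted measure the combination of log-likelihood ratios is constant. -/
lemma weighted_klDiv'_tilted (hρ0 : 0 < ρ) (hρ1 : ρ < 1) (hW : W ≪ ν) (hQ : Q ≪ ν)
    (hZ : 0 < ∫ y, renyiIntegrand ρ W Q ν y ∂ν) :
    ρ * klDiv' (tilted ρ W Q ν) W + (1 - ρ) * klDiv' (tilted ρ W Q ν) Q =
      -log (∫ y, renyiIntegrand ρ W Q ν y ∂ν) := by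
  have := isProbabilityMeasure_tilted hρ0.le hρ1 hZ
  have hTW := tilted_absolutelyContinuous_left (Q := Q) hρ0.ne' hW
  have hTQ := tilted_absolutelyContinuous_right (W := W) hρ1.ne hQ
  have hconst : ∀ᵐ y ∂(tilted ρ W Q ν),
      ρ * llr (tilted ρ W Q ν) W y + (1 - ρ) * llr (tilted ρ W Q ν) Q y =
        -log (∫ y, renyiIntegrand ρ W Q ν y ∂ν) := by
    filter_upwards [ae_log_renyiIntegrand_div_rnDeriv hW hQ hTW hTQ,
      tilted_absolutelyContinuous.ae_le (rnDeriv_tilted hρ1.ne hZ),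
      ae_toReal_rnDeriv_pos hTW hW, ae_toReal_rnDeriv_pos hTQ hQ] with y hlog hrn hf hg
    rw [hrn, ENNReal.toReal_ofReal (mul_nonneg (inv_nonneg.2 hZ.le) (renyiIntegrand_nonneg y)),
      div_mul_cancel_right₀ (renyiIntegrand_pos hf hg).ne', inv_inv] at hlog
    linarith
  rw [klDiv'_eq_integral_llr, klDiv'_eq_integral_llr, ← integral_const_mul, ← integral_const_mul,
    ← integral_add ((integrable_llr_tilted_left hρ0 hρ1 hW hQ hZ).const_mul _)
      ((integrable_llr_tilted_right hρ0 hρ1 hW hQ hZ).const_mul _), integral_congr_ae hconst]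
  simp

end Tilted

section Variational

variable [SigmaFinite ν] [IsProbabilityMeasure W] [IsProbabilityMeasure Q]

lemma ofReal_neg_log_le_weighted_klDivE [IsProbabilityMeasure V] (hρ0 : 0 < ρ) (hρ1 : ρ < 1)
    (hW : W ≪ ν) (hQ : Q ≪ ν) :
    ENNReal.ofReal (-log (∫ y, renyiIntegrand ρ W Q ν y ∂ν)) ≤
      ENNReal.ofReal ρ * klDivE V W + ENNReal.ofReal (1 - ρ) * klDivE V Q := by
  by_cases hV : (V ≪ W ∧ Integrable (llr V W) V) ∧ (V ≪ Q ∧ Integrable (llr V Q) V)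
  · obtain ⟨⟨hVW, hiW⟩, hVQ, hiQ⟩ := hV
    rw [weighted_klDivE_of_integrable hρ0.le (sub_pos.2 hρ1).le hVW hiW hVQ hiQ]
    exact ENNReal.ofReal_le_ofReal
      (neg_log_integral_renyiIntegrand_le hρ0.le hρ1.le hW hQ hVW hVQ hiW hiQ)
  · rw [weighted_klDivE_eq_top hρ0 (sub_pos.2 hρ1) hV]
    exact le_top

lemma weighted_klDivE_tilted (hρ0 : 0 < ρ) (hρ1 : ρ < 1) (hW : W ≪ ν) (hQ : Q ≪ ν)
    (hZ : 0 < ∫ y, renyiIntegrand ρ W Q ν y ∂ν) :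
    ENNReal.ofReal ρ * klDivE (tilted ρ W Q ν) W +
        ENNReal.ofReal (1 - ρ) * klDivE (tilted ρ W Q ν) Q =
      ENNReal.ofReal (-log (∫ y, renyiIntegrand ρ W Q ν y ∂ν)) := by
  have := isProbabilityMeasure_tilted hρ0.le hρ1 hZ
  have hTW := tilted_absolutelyContinuous_left (Q := Q) hρ0.ne' hW
  have hTQ := tilted_absolutelyContinuous_right (W := W) hρ1.ne hQ
  have hiW := integrable_llr_tilted_left hρ0 hρ1 hW hQ hZ
  have hiQ := integrable_llr_tilted_right hρ0 hρ1 hW hQ hZ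
  rw [weighted_klDivE_of_integrable hρ0.le (sub_pos.2 hρ1).le hTW hiW hTQ hiQ,
    weighted_klDiv'_tilted hρ0 hρ1 hW hQ hZ]

end Variational

end Renyi

/-- Variational characterization: for `ρ ∈ (0,1)`,
`(1−ρ) D_ρ(W‖Q) = inf_V [ρ D_1(V‖W) + (1−ρ) D_1(V‖Q)]`, the infimum running over all
probability measures `V`, with the convention `∞` when otherwise undefined. -/
theorem renyi_variational {Y : Type*} [MeasurableSpace Y] (ρ : ℝ)
    (hρ : ρ ∈ Set.Ioo (0 : ℝ) 1) (W Q ν : Measure Y)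
    [IsProbabilityMeasure W] [IsProbabilityMeasure Q] [SigmaFinite ν]
    (hW : W ≪ ν) (hQ : Q ≪ ν) :
    ENNReal.ofReal (1 - ρ) * renyiDivE ρ W Q ν =
      ⨅ (V : Measure Y) (_ : IsProbabilityMeasure V),
        ENNReal.ofReal ρ * klDivE V W + ENNReal.ofReal (1 - ρ) * klDivE V Q := by
  obtain ⟨hρ0, hρ1⟩ := hρ
  have h1ρ : 0 < 1 - ρ := sub_pos.2 hρ1
  by_cases hZ : 0 < ∫ y, renyiIntegrand ρ W Q ν y ∂ν
  · rw [renyiDivE, if_pos hZ, ← ENNReal.ofReal_mul h1ρ.le, one_sub_mul_renyiDiv hρ1.ne]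
    have := isProbabilityMeasure_tilted hρ0.le hρ1 hZ
    refine le_antisymm (le_iInf₂ fun V _ => ofReal_neg_log_le_weighted_klDivE hρ0 hρ1 hW hQ) ?_
    exact (iInf₂_le (tilted ρ W Q ν) this).trans_eq (weighted_klDivE_tilted hρ0 hρ1 hW hQ hZ)
  · rw [renyiDivE, if_neg hZ, ENNReal.mul_top (ENNReal.ofReal_pos.2 h1ρ).ne']
    refine (iInf₂_eq_top.2 ?_).symm
    intro V _
    exact weighted_klDivE_eq_top_of_not_integral_renyiIntegrand_pos hρ0 hρ1 hW hQ hZ
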